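/- Let (θ_n) be a sequence of systems on (G, X) such that Δ(m, θ_n) → 0 as n → ∞ for every probability measure m on G × X with m ≺ λ ⊗ κ, and let φ be an absolutely continuous system on (G, X). Then Δ(m, φ⊛θ_n) → 0 as n → ∞ for every probability measure m on G × X with m ≺ λ ⊗ κ. -/

import Mathlib

open MeasureTheory Filter Topology

/-- Total variation norm `‖μ − ν‖` of the difference of two finite measures. -/
noncomputable def tv {α : Type*} [MeasurableSpace α] (μ ν : Measure α) : ℝ :=
  ((μ - ν) Set.univ + (ν - μ) Set.univ).toReal

/-- Pushforward `gμ` of a measure on `G` under the left translation `h ↦ g * h`. -/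
noncomputable def ltrans {G : Type*} [MeasurableSpace G] [Mul G] (g : G) (μ : Measure G) :
    Measure G :=
  μ.map (fun h => g * h)

/-- Convolution `α * β` of measures on `G`: the pushforward of `α ⊗ β` under
`(g, h) ↦ g * h`. -/
noncomputable def mconv {G : Type*} [MeasurableSpace G] [Mul G] (μ ν : Measure G) : Measure G :=
  (μ.prod ν).map (fun p : G × G => p.1 * p.2)

/-- `convPow θ k = θ^{*k}`, the `k`-th convolution power of `θ` (with `θ^{*0} = δ_1`). -/
noncomputable def convPow {G : Type*} [MeasurableSpace G] [Monoid G] (θ : Measure G) :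
    ℕ → Measure G
  | 0 => Measure.dirac 1
  | (k + 1) => mconv θ (convPow θ k)

/-- Mean discrepancy `Δ(m, θ) = ∫_G ‖gθ − θ‖ dm(g)`. -/
noncomputable def disc {G : Type*} [MeasurableSpace G] [Mul G] (m θ : Measure G) : ℝ :=
  ∫ g, tv (ltrans g θ) θ ∂m

/-- A system on `(G, X)`: a Markov kernel `x ↦ θ^x` from `X` to `G`, i.e. a measurable
family of Borel probability measures on `G`. -/
def IsSystem {G X : Type*} [MeasurableSpace G] [MeasurableSpace X] (θ : X → Measure G) : Prop :=
  Measurable θ ∧ ∀ x, IsProbabilityMeasure (θ x)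

/-- Discrepancy function of a system: `D_θ(g, x) = ‖g θ^{g⁻¹·x} − θ^x‖`. -/
noncomputable def Dsys {G X : Type*} [MeasurableSpace G] [Group G] [MulAction G X]
    (θ : X → Measure G) (p : G × X) : ℝ :=
  tv (ltrans p.1 (θ (p.1⁻¹ • p.2))) (θ p.2)

/-- Convolution of systems: `(θ⊛φ)^x = ∫_G g φ^{g⁻¹·x} dθ^x(g)`. -/
noncomputable def sconv {G X : Type*} [MeasurableSpace G] [Group G] [MulAction G X]
    (θ φ : X → Measure G) : X → Measure G :=
  fun x => (θ x).bind fun g => ltrans g (φ (g⁻¹ • x))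

/-- `k`-fold convolution power `θ^{⊛k}` of a system (with `θ^{⊛0} = δ_1` fibrewise). -/
noncomputable def sconvPow {G X : Type*} [MeasurableSpace G] [Group G] [MulAction G X]
    (θ : X → Measure G) : ℕ → X → Measure G
  | 0 => fun _ => Measure.dirac 1
  | (k + 1) => sconv θ (sconvPow θ k)

/-- Mean discrepancy `Δ(m, θ) = ∫_{G×X} D_θ dm` of a system against a measure on `G × X`. -/
noncomputable def sdisc {G X : Type*} [MeasurableSpace G] [MeasurableSpace X] [Group G]
    [MulAction G X] (m : Measure (G × X)) (θ : X → Measure G) : ℝ :=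
  ∫ p, Dsys θ p ∂m

/-- The measure `mQ_φ` on `G × X`:
`mQ_φ(A) = ∫_{G×X} ∫_G 1_A(g h, x) dφ^{g⁻¹·x}(h) dm(g, x)`. -/
noncomputable def mQ {G X : Type*} [MeasurableSpace G] [MeasurableSpace X] [Group G]
    [MulAction G X] (m : Measure (G × X)) (φ : X → Measure G) : Measure (G × X) :=
  m.bind fun p => (φ (p.1⁻¹ • p.2)).map fun h => (p.1 * h, p.2)

/-- The measure `m̄Q_φ` on `G × X`:
`m̄Q_φ(A) = ∫_{G×X} ∫_G 1_A(h, x) dφ^{x}(h) dm(g, x)`. -/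
noncomputable def mbarQ {G X : Type*} [MeasurableSpace G] [MeasurableSpace X] [Group G]
    (m : Measure (G × X)) (φ : X → Measure G) : Measure (G × X) :=
  m.bind fun p => (φ p.2).map fun h => (h, p.2)

/-!
Write `(φ⊛θ)^x` as the mixture `∫ h θ^{h⁻¹·x} dφ^x(h)` and `g (φ⊛θ)^{g⁻¹·x}` as
`∫ g h θ^{(g h)⁻¹·x} dφ^{g⁻¹·x}(h)`. Inserting `θ^x` between them and using convexity of the total
variation norm gives
`D_{φ⊛θ}(g, x) ≤ ∫ D_θ(g h, x) dφ^{g⁻¹·x}(h) + ∫ D_θ(h, x) dφ^x(h)`,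
which integrates to `Δ(m, φ⊛θ) ≤ Δ(mQ_φ, θ) + Δ(m̄Q_φ, θ)`. The measures `mQ_φ` and `m̄Q_φ` only
move mass along the fibres `G × {x}`, by measures absolutely continuous with respect to the
left-invariant `λ`, so they are again probability measures `≺ λ ⊗ κ` and the hypothesis applies.
-/

open ProbabilityTheory Set

section TotalVariation

variable {α : Type*} [MeasurableSpace α] {μ ν ρ : Measure α} {s : Set α}

lemma tv_nonneg : 0 ≤ tv μ ν := ENNReal.toReal_nonneg

lemma tv_comm (μ ν : Measure α) : tv μ ν = tv ν μ := by
  simp only [tv, add_comm]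

lemma sub_apply_univ_of_isHahnDecomposition [IsFiniteMeasure ν]
    (hs : IsHahnDecomposition ν μ s) :
    (μ - ν) univ = μ s - ν s := by
  have hsub : (μ - ν) s = μ s - ν s := by
    rw [← Measure.restrict_apply_univ,
      Measure.restrict_sub_eq_restrict_sub_restrict hs.measurableSet,
      Measure.sub_apply MeasurableSet.univ hs.le_on, Measure.restrict_apply_univ,
      Measure.restrict_apply_univ]
  rw [← measure_add_measure_compl hs.measurableSet, hsub,
    Measure.sub_apply_eq_zero_of_isHahnDecomposition hs.compl, add_zero]

variable [IsFiniteMeasure μ] [IsFiniteMeasure ν]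

lemma tv_eq_measureReal_add : tv μ ν = (μ - ν).real univ + (ν - μ).real univ :=
  ENNReal.toReal_add (measure_ne_top _ _) (measure_ne_top _ _)

lemma measure_sub_measure_le_sub_apply_univ (t : Set α) : μ t - ν t ≤ (μ - ν) univ :=
  tsub_le_iff_right.2 <| (Measure.sub_le_iff_le_add.1 le_rfl : μ ≤ μ - ν + ν) t |>.trans
    (add_le_add_left (measure_mono (subset_univ t)) _)

lemma measureReal_sub_measureReal_le (t : Set α) : μ.real t - ν.real t ≤ (μ - ν).real univ :=
  (ENNReal.le_toReal_sub (measure_ne_top ν t)).trans <|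
    ENNReal.toReal_mono (measure_ne_top _ _) (measure_sub_measure_le_sub_apply_univ t)

lemma le_tv (t : Set α) : μ.real t - ν.real t + (ν.real tᶜ - μ.real tᶜ) ≤ tv μ ν := by
  rw [tv_eq_measureReal_add]
  exact add_le_add (measureReal_sub_measureReal_le t) (measureReal_sub_measureReal_le tᶜ)

lemma exists_tv_eq : ∃ s, MeasurableSet s ∧
    tv μ ν = μ.real s - ν.real s + (ν.real sᶜ - μ.real sᶜ) := by
  obtain ⟨s, hs⟩ := exists_isHahnDecomposition ν μ
  refine ⟨s, hs.measurableSet, ?_⟩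
  rw [tv_eq_measureReal_add, measureReal_def, measureReal_def,
    sub_apply_univ_of_isHahnDecomposition hs, sub_apply_univ_of_isHahnDecomposition hs.compl,
    ENNReal.toReal_sub_of_le (by simpa using hs.le_on univ) (measure_ne_top _ _),
    ENNReal.toReal_sub_of_le (by simpa using hs.ge_on_compl univ) (measure_ne_top _ _)]
  rfl

lemma tv_triangle [IsFiniteMeasure ρ] : tv μ ρ ≤ tv μ ν + tv ν ρ := by
  obtain ⟨s, -, h⟩ := exists_tv_eq (μ := μ) (ν := ρ)
  have := le_tv (μ := μ) (ν := ν) s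
  have := le_tv (μ := ν) (ν := ρ) s
  linarith

lemma tv_le_two [IsProbabilityMeasure μ] [IsProbabilityMeasure ν] : tv μ ν ≤ 2 := by
  obtain ⟨s, -, h⟩ := exists_tv_eq (μ := μ) (ν := ν)
  have : μ.real s ≤ 1 := measureReal_le_one
  have : ν.real sᶜ ≤ 1 := measureReal_le_one
  have : 0 ≤ ν.real s := measureReal_nonneg
  have : 0 ≤ μ.real sᶜ := measureReal_nonneg
  linarith

end TotalVariation

section MeasurableTotalVariation

open MeasurableSpace symmDiff

variable {α β : Type*} [MeasurableSpace α] [MeasurableSpace β] [CountablyGenerated α]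

abbrev countableGeneratingAlgebra (α : Type*) [MeasurableSpace α] [CountablyGenerated α] :
    Set (Set α) :=
  generateSetAlgebra (countableGeneratingSet α)

lemma measurableSpace_eq_generateFrom_countableGeneratingAlgebra :
    ‹MeasurableSpace α› = generateFrom (countableGeneratingAlgebra α) := by
  rw [generateFrom_generateSetAlgebra_eq, generateFrom_countableGeneratingSet]

lemma measurableSet_of_mem_countableGeneratingAlgebra {t : Set α}
    (ht : t ∈ countableGeneratingAlgebra α) : MeasurableSet t :=
  measurableSpace_eq_generateFrom_countableGeneratingAlgebra (α := α) ▸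
    measurableSet_generateFrom ht

lemma sub_apply_univ_eq_iSup (μ ν : Measure α) [IsFiniteMeasure μ] [IsFiniteMeasure ν] :
    (μ - ν) univ = ⨆ t : countableGeneratingAlgebra α, μ t - ν t := by
  refine le_antisymm ?_ (iSup_le fun t => measure_sub_measure_le_sub_apply_univ _)
  obtain ⟨s, hs⟩ := exists_isHahnDecomposition ν μ
  rw [sub_apply_univ_of_isHahnDecomposition hs]
  refine ENNReal.le_of_forall_pos_le_add fun ε hε _ => ?_
  have hdense := Measure.MeasureDense.of_generateFrom_isSetAlgebra_finite (μ + ν)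
    isSetAlgebra_generateSetAlgebra measurableSpace_eq_generateFrom_countableGeneratingAlgebra
  obtain ⟨t, ht, hst⟩ :=
    hdense.approx s hs.measurableSet (measure_ne_top _ _) (ε : ℝ) (by positivity)
  have hμ : μ s ≤ μ t + μ (s ∆ t) :=
    (measure_mono fun x _ => by by_cases x ∈ t <;> simp_all [symmDiff]).trans
      (measure_union_le _ _)
  have hν : ν t ≤ ν s + ν (s ∆ t) :=
    (measure_mono fun x _ => by by_cases x ∈ s <;> simp_all [symmDiff]).trans
      (measure_union_le _ _)
  calc μ s - ν s ≤ (μ t - ν t) + (μ + ν) (s ∆ t) := by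
        rw [Measure.add_apply, tsub_le_iff_right]
        calc μ s ≤ μ t + μ (s ∆ t) := hμ
          _ ≤ (μ t - ν t + ν t) + μ (s ∆ t) := by gcongr; exact le_tsub_add
          _ ≤ (μ t - ν t + (ν s + ν (s ∆ t))) + μ (s ∆ t) := by gcongr
          _ = (μ t - ν t) + (μ (s ∆ t) + ν (s ∆ t)) + ν s := by ring
    _ ≤ (⨆ u : countableGeneratingAlgebra α, μ u - ν u) + ε := by
        gcongr
        · exact le_iSup (fun u : countableGeneratingAlgebra α => μ u - ν u) ⟨t, ht⟩
        · simpa using hst.le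

lemma measurable_tv (κ η : Kernel β α) [IsFiniteKernel κ] [IsFiniteKernel η] :
    Measurable fun b => tv (κ b) (η b) := by
  have : Countable (countableGeneratingAlgebra α) :=
    (countable_generateSetAlgebra countable_countableGeneratingSet).to_subtype
  have hsub : ∀ (κ η : Kernel β α) [IsFiniteKernel κ] [IsFiniteKernel η],
      Measurable fun b => (κ b - η b) univ := fun κ η _ _ => by
    simp_rw [sub_apply_univ_eq_iSup]
    exact .iSup fun t =>
      have ht := measurableSet_of_mem_countableGeneratingAlgebra t.2
      (κ.measurable_coe ht).sub (η.measurable_coe ht)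
  exact ENNReal.measurable_toReal.comp ((hsub κ η).add (hsub η κ))

end MeasurableTotalVariation

section Bind

variable {α β : Type*} [MeasurableSpace α] [MeasurableSpace β] {m : Measure α}

lemma MeasureTheory.Measure.integral_bind {E : Type*} [NormedAddCommGroup E] [NormedSpace ℝ E]
    (κ : Kernel α β) {f : β → E} (hf : Integrable f (κ ∘ₘ m)) :
    ∫ b, f b ∂(κ ∘ₘ m) = ∫ a, ∫ b, f b ∂κ a ∂m :=
  Kernel.integral_comp (κ := Kernel.const Unit m) (a := ()) hf

lemma MeasureTheory.Integrable.integral_bind {E : Type*} [NormedAddCommGroup E] [NormedSpace ℝ E]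
    {κ : Kernel α β} {f : β → E} (hf : Integrable f (κ ∘ₘ m)) :
    Integrable (fun a => ∫ b, f b ∂κ a) m :=
  Integrable.integral_comp (κ := Kernel.const Unit m) (a := ()) hf

variable [IsFiniteMeasure m]

lemma MeasureTheory.Measure.measureReal_bind (κ : Kernel α β) [IsMarkovKernel κ] {s : Set β}
    (hs : MeasurableSet s) : (κ ∘ₘ m).real s = ∫ a, (κ a).real s ∂m := by
  rw [← integral_indicator_one hs, Measure.integral_bind κ ((integrable_const 1).indicator hs)]
  simp_rw [integral_indicator_one hs]

lemma integrable_measureReal_kernel (κ : Kernel α β) [IsMarkovKernel κ] {s : Set β}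
    (hs : MeasurableSet s) : Integrable (fun a => (κ a).real s) m :=
  .of_mem_Icc 0 1 (κ.measurable_coe hs).ennreal_toReal.aemeasurable
    (ae_of_all _ fun _ => ⟨measureReal_nonneg, measureReal_le_one⟩)

variable [MeasurableSpace.CountablyGenerated β]

lemma integrable_tv_kernel (κ η : Kernel α β) [IsMarkovKernel κ] [IsMarkovKernel η] :
    Integrable (fun a => tv (κ a) (η a)) m :=
  .of_mem_Icc 0 2 (measurable_tv κ η).aemeasurable (ae_of_all _ fun _ => ⟨tv_nonneg, tv_le_two⟩)

lemma tv_bind_le (κ η : Kernel α β) [IsMarkovKernel κ] [IsMarkovKernel η] :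
    tv (κ ∘ₘ m) (η ∘ₘ m) ≤ ∫ a, tv (κ a) (η a) ∂m := by
  obtain ⟨s, hs, h⟩ := exists_tv_eq (μ := κ ∘ₘ m) (ν := η ∘ₘ m)
  have hκ := integrable_measureReal_kernel (m := m) κ hs
  have hη := integrable_measureReal_kernel (m := m) η hs
  have hκc := integrable_measureReal_kernel (m := m) κ hs.compl
  have hηc := integrable_measureReal_kernel (m := m) η hs.compl
  have hs' : Integrable (fun a => (κ a).real s - (η a).real s) m := hκ.sub hη
  have hsc' : Integrable (fun a => (η a).real sᶜ - (κ a).real sᶜ) m := hηc.sub hκc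
  rw [h, Measure.measureReal_bind κ hs, Measure.measureReal_bind η hs,
    Measure.measureReal_bind κ hs.compl, Measure.measureReal_bind η hs.compl,
    ← integral_sub hκ hη, ← integral_sub hηc hκc, ← integral_add hs' hsc']
  exact integral_mono (hs'.add hsc') (integrable_tv_kernel κ η) fun a => le_tv s

lemma tv_bind_le_const [IsProbabilityMeasure m] (κ : Kernel α β) [IsMarkovKernel κ]
    (ν : Measure β) [IsProbabilityMeasure ν] :
    tv (κ ∘ₘ m) ν ≤ ∫ a, tv (κ a) ν ∂m := by
  simpa using tv_bind_le (m := m) κ (Kernel.const α ν)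

end Bind

lemma ProbabilityTheory.Kernel.measurable_map_of_measurable_uncurry {β γ δ : Type*}
    [MeasurableSpace β] [MeasurableSpace γ] [MeasurableSpace δ] (κ : Kernel β γ)
    [IsSFiniteKernel κ] {f : β × γ → δ} (hf : Measurable f) :
    Measurable fun b => (κ b).map fun c => f (b, c) := by
  refine Measure.measurable_of_measurable_coe _ fun s hs => ?_
  convert Kernel.measurable_kernel_prodMk_left (κ := κ) (hf hs) using 2 with b
  exact Measure.map_apply (hf.comp measurable_prodMk_left) hs

lemma ProbabilityTheory.Kernel.measurable_bind_of_measurable_uncurry {β γ δ : Type*}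
    [MeasurableSpace β] [MeasurableSpace γ] [MeasurableSpace δ] (κ : Kernel β γ)
    [IsSFiniteKernel κ] (η : Kernel (β × γ) δ) :
    Measurable fun b => (κ b).bind fun c => η (b, c) := by
  refine Measure.measurable_of_measurable_coe _ fun s hs => ?_
  convert (η.measurable_coe hs).lintegral_kernel_prod_right' (κ := κ) using 2 with b
  exact Measure.bind_apply hs (η.measurable.comp measurable_prodMk_left).aemeasurable

lemma MeasureTheory.Measure.AbsolutelyContinuous.comp_prod {α β : Type*} [MeasurableSpace α]
    [MeasurableSpace β] {μ : Measure α} {ν : Measure β} [SFinite μ] [SFinite ν]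
    {m : Measure (α × β)} (hm : m ≪ μ.prod ν) {κ : Kernel (α × β) (α × β)}
    (hκ : ∀ p, κ p ≪ μ.map fun a => (a, p.2)) : κ ∘ₘ m ≪ μ.prod ν := by
  refine Measure.AbsolutelyContinuous.mk fun S hS hS0 => ?_
  have hfiber : ∀ᵐ b ∂ν, ∀ᵐ a ∂μ, (a, b) ∉ S :=
    (Measure.ae_ae_comm hS.compl).1 <| (Measure.ae_prod_mem_iff_ae_ae_mem hS.compl).1 <|
      measure_eq_zero_iff_ae_notMem.1 hS0
  have hnull : ∀ᵐ b ∂ν, (μ.map fun a => (a, b)) S = 0 := hfiber.mono fun b hb => by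
    rw [Measure.map_apply (by fun_prop) hS]
    exact measure_eq_zero_iff_ae_notMem.2 hb
  rw [Measure.bind_apply hS κ.aemeasurable, lintegral_eq_zero_iff (κ.measurable_coe hS)]
  filter_upwards [hm.ae_le (Measure.quasiMeasurePreserving_snd.ae hnull)] with p hp using hκ p hp

lemma isProbabilityMeasure_ltrans {G : Type*} [MeasurableSpace G] [Mul G] [MeasurableMul G]
    (g : G) (μ : Measure G) [IsProbabilityMeasure μ] : IsProbabilityMeasure (ltrans g μ) :=
  Measure.isProbabilityMeasure_map (measurable_const_mul g).aemeasurable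

lemma ltrans_ltrans {G : Type*} [MeasurableSpace G] [Semigroup G] [MeasurableMul G]
    (g h : G) (μ : Measure G) : ltrans g (ltrans h μ) = ltrans (g * h) μ := by
  simp only [ltrans, Measure.map_map (measurable_const_mul g) (measurable_const_mul h),
    Function.comp_def, mul_assoc]

lemma dsys_nonneg {G X : Type*} [MeasurableSpace G] [Group G] [MulAction G X]
    {θ : X → Measure G} (p : G × X) : 0 ≤ Dsys θ p :=
  tv_nonneg

noncomputable section Systems

variable {G X : Type*} [MeasurableSpace G] [MeasurableSpace X] {θ φ ψ : X → Measure G}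

def IsSystem.kernel (hθ : IsSystem θ) : Kernel X G := ⟨θ, hθ.1⟩

instance (hθ : IsSystem θ) : IsMarkovKernel hθ.kernel := ⟨hθ.2⟩

def IsSystem.qbarKernel (hφ : IsSystem φ) : Kernel (G × X) (G × X) :=
  ⟨fun p => (φ p.2).map fun h => (h, p.2),
    (hφ.kernel.comap Prod.snd measurable_snd).measurable_map_of_measurable_uncurry
      (f := fun q : (G × X) × G => (q.2, q.1.2)) (by fun_prop)⟩

instance (hφ : IsSystem φ) : IsMarkovKernel hφ.qbarKernel :=
  ⟨fun p => have := hφ.2 p.2; Measure.isProbabilityMeasure_map (by fun_prop)⟩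

section Group

variable [Group G]

lemma mbarQ_eq_comp (hφ : IsSystem φ) (m : Measure (G × X)) : mbarQ m φ = hφ.qbarKernel ∘ₘ m :=
  rfl

lemma isProbabilityMeasure_mbarQ (hφ : IsSystem φ) (m : Measure (G × X))
    [IsProbabilityMeasure m] : IsProbabilityMeasure (mbarQ m φ) := by
  rw [mbarQ_eq_comp hφ]
  infer_instance

lemma mbarQ_absolutelyContinuous {lam : Measure G} {κ : Measure X} [SFinite lam] [SFinite κ]
    {m : Measure (G × X)} (hφ : IsSystem φ) (hφac : ∀ x, φ x ≪ lam) (hm : m ≪ lam.prod κ) :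
    mbarQ m φ ≪ lam.prod κ := by
  rw [mbarQ_eq_comp hφ]
  exact hm.comp_prod fun p => (hφac p.2).map (by fun_prop)

end Group

variable [Group G] [MeasurableMul₂ G] [MeasurableInv G] [MulAction G X] [MeasurableSMul₂ G X]

namespace IsSystem

def translate (hθ : IsSystem θ) : Kernel (G × X) G :=
  ⟨fun p => ltrans p.1 (θ (p.1⁻¹ • p.2)),
    (hθ.kernel.comap (fun p : G × X => p.1⁻¹ • p.2)
      (by fun_prop)).measurable_map_of_measurable_uncurry
      (f := fun q : (G × X) × G => q.1.1 * q.2) (by fun_prop)⟩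

lemma translate_apply (hθ : IsSystem θ) (p : G × X) :
    hθ.translate p = ltrans p.1 (θ (p.1⁻¹ • p.2)) :=
  rfl

instance (hθ : IsSystem θ) : IsMarkovKernel hθ.translate :=
  ⟨fun p => have := hθ.2 (p.1⁻¹ • p.2); isProbabilityMeasure_ltrans p.1 _⟩

def qKernel (hφ : IsSystem φ) : Kernel (G × X) (G × X) :=
  ⟨fun p => (φ (p.1⁻¹ • p.2)).map fun h => (p.1 * h, p.2),
    (hφ.kernel.comap (fun p : G × X => p.1⁻¹ • p.2)
      (by fun_prop)).measurable_map_of_measurable_uncurry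
      (f := fun q : (G × X) × G => (q.1.1 * q.2, q.1.2)) (by fun_prop)⟩

instance (hφ : IsSystem φ) : IsMarkovKernel hφ.qKernel :=
  ⟨fun p => have := hφ.2 (p.1⁻¹ • p.2); Measure.isProbabilityMeasure_map (by fun_prop)⟩

lemma dsys_le_two (hθ : IsSystem θ) (p : G × X) : Dsys θ p ≤ 2 :=
  have := hθ.2 p.2
  tv_le_two (μ := hθ.translate p)

lemma sconv_eq_comp (hψ : IsSystem ψ) (x : X) :
    sconv φ ψ x = hψ.translate.comap (fun g => (g, x)) (by fun_prop) ∘ₘ φ x :=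
  rfl

lemma ltrans_sconv (hψ : IsSystem ψ) (g : G) (x : X) :
    ltrans g (sconv φ ψ (g⁻¹ • x))
      = hψ.translate.comap (fun h => (g * h, x)) (by fun_prop) ∘ₘ φ (g⁻¹ • x) := by
  rw [ltrans, hψ.sconv_eq_comp, Measure.map_comp _ _ (measurable_const_mul g)]
  congr 1
  ext1 h
  rw [Kernel.map_apply _ (measurable_const_mul g), Kernel.comap_apply, Kernel.comap_apply,
    translate_apply, translate_apply, ← ltrans, ltrans_ltrans, mul_inv_rev, mul_smul]

end IsSystem

lemma isSystem_sconv (hφ : IsSystem φ) (hψ : IsSystem ψ) : IsSystem (sconv φ ψ) :=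
  ⟨hφ.kernel.measurable_bind_of_measurable_uncurry (hψ.translate.comap Prod.swap measurable_swap),
    fun x => have := hφ.2 x; by rw [hψ.sconv_eq_comp]; infer_instance⟩

lemma mQ_eq_comp (hφ : IsSystem φ) (m : Measure (G × X)) : mQ m φ = hφ.qKernel ∘ₘ m := rfl

lemma isProbabilityMeasure_mQ (hφ : IsSystem φ) (m : Measure (G × X)) [IsProbabilityMeasure m] :
    IsProbabilityMeasure (mQ m φ) := by
  rw [mQ_eq_comp hφ]
  infer_instance

lemma mQ_absolutelyContinuous {lam : Measure G} {κ : Measure X} [SFinite lam] [SFinite κ]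
    [lam.IsMulLeftInvariant] {m : Measure (G × X)} (hφ : IsSystem φ) (hφac : ∀ x, φ x ≪ lam)
    (hm : m ≪ lam.prod κ) : mQ m φ ≪ lam.prod κ := by
  rw [mQ_eq_comp hφ]
  refine hm.comp_prod fun p => ?_
  have h := ((hφac (p.1⁻¹ • p.2)).map (measurable_const_mul p.1)).map
    (by fun_prop : Measurable fun h : G => (h, p.2))
  rwa [map_mul_left_eq_self lam p.1, Measure.map_map (by fun_prop) (by fun_prop)] at h

variable [MeasurableSpace.CountablyGenerated G]

lemma IsSystem.measurable_dsys (hθ : IsSystem θ) : Measurable (Dsys θ) :=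
  measurable_tv hθ.translate (hθ.kernel.comap Prod.snd measurable_snd)

lemma IsSystem.integrable_dsys (hθ : IsSystem θ) (m : Measure (G × X)) [IsFiniteMeasure m] :
    Integrable (Dsys θ) m :=
  .of_mem_Icc 0 2 hθ.measurable_dsys.aemeasurable
    (ae_of_all _ fun p => ⟨dsys_nonneg p, hθ.dsys_le_two p⟩)

lemma dsys_sconv_le (hφ : IsSystem φ) (hψ : IsSystem ψ) (p : G × X) :
    Dsys (sconv φ ψ) p ≤ ∫ q, Dsys ψ q ∂hφ.qKernel p + ∫ q, Dsys ψ q ∂hφ.qbarKernel p := by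
  obtain ⟨g, x⟩ := p
  have := hφ.2 x
  have := hφ.2 (g⁻¹ • x)
  have := hψ.2 x
  have := (isSystem_sconv hφ hψ).2 x
  have := (isSystem_sconv hφ hψ).2 (g⁻¹ • x)
  have := isProbabilityMeasure_ltrans g (sconv φ ψ (g⁻¹ • x))
  have hQ : ∫ q, Dsys ψ q ∂hφ.qKernel (g, x) = ∫ h, Dsys ψ (g * h, x) ∂φ (g⁻¹ • x) :=
    integral_map (by fun_prop) hψ.measurable_dsys.aestronglyMeasurable
  have hQbar : ∫ q, Dsys ψ q ∂hφ.qbarKernel (g, x) = ∫ h, Dsys ψ (h, x) ∂φ x :=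
    integral_map (by fun_prop) hψ.measurable_dsys.aestronglyMeasurable
  have h₁ : tv (ltrans g (sconv φ ψ (g⁻¹ • x))) (ψ x) ≤ ∫ h, Dsys ψ (g * h, x) ∂φ (g⁻¹ • x) := by
    rw [hψ.ltrans_sconv]
    exact tv_bind_le_const _ (ψ x)
  have h₂ : tv (ψ x) (sconv φ ψ x) ≤ ∫ h, Dsys ψ (h, x) ∂φ x := by
    rw [tv_comm, hψ.sconv_eq_comp]
    exact tv_bind_le_const _ (ψ x)
  rw [hQ, hQbar]
  exact tv_triangle.trans (add_le_add h₁ h₂)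

lemma sdisc_sconv_le (hφ : IsSystem φ) (hψ : IsSystem ψ) (m : Measure (G × X))
    [IsFiniteMeasure m] :
    sdisc m (sconv φ ψ) ≤ sdisc (mQ m φ) ψ + sdisc (mbarQ m φ) ψ := by
  have hQ := hψ.integrable_dsys (hφ.qKernel ∘ₘ m)
  have hQbar := hψ.integrable_dsys (hφ.qbarKernel ∘ₘ m)
  rw [sdisc, sdisc, sdisc, mQ_eq_comp hφ, mbarQ_eq_comp hφ, Measure.integral_bind _ hQ,
    Measure.integral_bind _ hQbar, ← integral_add hQ.integral_bind hQbar.integral_bind]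
  exact integral_mono ((isSystem_sconv hφ hψ).integrable_dsys m)
    (hQ.integral_bind.add hQbar.integral_bind) (dsys_sconv_le hφ hψ)

end Systems

theorem stmt13_general {G X : Type*} [TopologicalSpace G] [Group G] [IsTopologicalGroup G]
    [LocallyCompactSpace G] [SecondCountableTopology G] [MeasurableSpace G] [BorelSpace G]
    [MeasurableSpace X] [MulAction G X] [MeasurableSMul₂ G X]
    (lam : Measure G) (hlam : lam.IsHaarMeasure)
    (κ : Measure X) (hκ : SigmaFinite κ)
    (θ : ℕ → X → Measure G) (hθ : ∀ n, IsSystem (θ n))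
    (hISAI : ∀ m : Measure (G × X), IsProbabilityMeasure m → m ≪ lam.prod κ →
      Tendsto (fun n => sdisc m (θ n)) atTop (nhds 0))
    (φ : X → Measure G) (hφ : IsSystem φ) (hφac : ∀ x, φ x ≪ lam) :
    ∀ m : Measure (G × X), IsProbabilityMeasure m → m ≪ lam.prod κ →
      Tendsto (fun n => sdisc m (sconv φ (θ n))) atTop (nhds 0) := by
  intro m hm hmac
  have hQ := hISAI _ (isProbabilityMeasure_mQ hφ m) (mQ_absolutelyContinuous hφ hφac hmac)
  have hQbar := hISAI _ (isProbabilityMeasure_mbarQ hφ m) (mbarQ_absolutelyContinuous hφ hφac hmac)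
  refine squeeze_zero (fun n => integral_nonneg dsys_nonneg)
    (fun n => sdisc_sconv_le hφ (hθ n) m) ?_
  simpa using hQ.add hQbar

/-- If `(θ_n)` are systems with `Δ(m, θ_n) → 0` for every probability
measure `m ≺ λ ⊗ κ`, and `φ` is an absolutely continuous system, then
`Δ(m, φ⊛θ_n) → 0` for every probability measure `m ≺ λ ⊗ κ`. -/
theorem stmt13 {G X : Type*} [TopologicalSpace G] [Group G] [IsTopologicalGroup G]
    [LocallyCompactSpace G] [SecondCountableTopology G] [MeasurableSpace G] [BorelSpace G]
    [MeasurableSpace X] [StandardBorelSpace X] [MulAction G X] [MeasurableSMul₂ G X]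
    (lam : Measure G) (hlam : lam.IsHaarMeasure)
    (κ : Measure X) (hκ : SigmaFinite κ)
    (θ : ℕ → X → Measure G) (hθ : ∀ n, IsSystem (θ n))
    (hISAI : ∀ m : Measure (G × X), IsProbabilityMeasure m → m ≪ lam.prod κ →
      Tendsto (fun n => sdisc m (θ n)) atTop (nhds 0))
    (φ : X → Measure G) (hφ : IsSystem φ) (hφac : ∀ x, φ x ≪ lam) :
    ∀ m : Measure (G × X), IsProbabilityMeasure m → m ≪ lam.prod κ →
      Tendsto (fun n => sdisc m (sconv φ (θ n))) atTop (nhds 0) :=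
  stmt13_general lam hlam κ hκ θ hθ hISAI φ hφ hφac
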